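/- arXiv:1911.06580 — 4 statements merged into one kernel-verified Lean document; each statement's English description precedes it below -/
import Mathlib

section
/- Let C be a preadditive monoidal category in which tensoring with a fixed object is additive in the other variable (monoidally preadditive), let X be an object of C, let d be a natural number, let δ : X ⊗ X ⟶ X be a morphism, and let π : ℕ → End(X) be a family of endomorphisms such that: π(i) ∘ π(i) = π(i) for all i (projectors); π(i) ∘ π(j) = 0 for all i ≠ j (orthogonality); π(i) = 0 for all i > 2d; and π(0) + π(1) + … + π(2d) = 𝟙_X (completeness). Then the following conditions are equivalent: (a) for all i, j, k with k ≠ i + j, one has π(k) ∘ δ ∘ (π(i) ⊗ π(j)) = 0; (b) for all i, j, one has π(i+j) ∘ δ ∘ (π(i) ⊗ π(j)) = δ ∘ (π(i) ⊗ π(j)); (c) δ = Σ_{i=0}^{2d} Σ_{j=0}^{2d} π(i+j) ∘ δ ∘ (π(i) ⊗ π(j)). -/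
/-!
The products `p i ⊗ p j` again form a complete family of orthogonal projectors, now on `X ⊗ X`,
so all three conditions say that `δ` respects two decompositions. A morphism `g` into `X` satisfies
`g ≫ p n = g` exactly when `g ≫ p k = 0` for all `k ≠ n`, since `g = ∑ₖ g ≫ p k`; this gives
(a) ↔ (b). A morphism out of `X ⊗ X` is the sum of its restrictions to the summands `p i ⊗ p j`
and is determined by them; this gives (b) ↔ (c).
-/

open CategoryTheory MonoidalCategory

namespace CategoryTheory

structure IsCompleteOrthogonal {C : Type*} [Category C] [Preadditive C] {X : C} {ι : Type*}
    (s : Finset ι) (p : ι → (X ⟶ X)) : Prop where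
  comp_eq_zero : ∀ i j, i ≠ j → p i ≫ p j = 0
  sum_eq_id : ∑ i ∈ s, p i = 𝟙 X

namespace IsCompleteOrthogonal

variable {C : Type*} [Category C] [Preadditive C] {X Y : C} {ι : Type*} {s : Finset ι}
  {p : ι → (X ⟶ X)}

theorem sum_comp (hp : IsCompleteOrthogonal s p) (f : X ⟶ Y) : ∑ i ∈ s, p i ≫ f = f := by
  rw [← Preadditive.sum_comp, hp.sum_eq_id, Category.id_comp]

theorem comp_sum (hp : IsCompleteOrthogonal s p) (f : Y ⟶ X) : ∑ i ∈ s, f ≫ p i = f := by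
  rw [← Preadditive.comp_sum, hp.sum_eq_id, Category.comp_id]

theorem eq_zero_of_notMem (hp : IsCompleteOrthogonal s p) {i : ι} (hi : i ∉ s) : p i = 0 := by
  rw [← hp.sum_comp (p i)]
  exact Finset.sum_eq_zero fun k hk => hp.comp_eq_zero k i (ne_of_mem_of_not_mem hk hi)

theorem comp_self (hp : IsCompleteOrthogonal s p) (i : ι) : p i ≫ p i = p i := by
  by_cases hi : i ∈ s
  · conv_rhs => rw [← hp.comp_sum (p i)]
    exact (Finset.sum_eq_single_of_mem i hi fun k _ hk => hp.comp_eq_zero i k hk.symm).symm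
  · simp [hp.eq_zero_of_notMem hi]

theorem comp_sum_comp (hp : IsCompleteOrthogonal s p) (g : ι → (X ⟶ Y)) (i : ι) :
    p i ≫ ∑ k ∈ s, p k ≫ g k = p i ≫ g i := by
  by_cases hi : i ∈ s
  · rw [Preadditive.comp_sum, Finset.sum_eq_single_of_mem i hi, ← Category.assoc, hp.comp_self]
    intro k _ hk
    rw [← Category.assoc, hp.comp_eq_zero i k hk.symm, Limits.zero_comp]
  · simp [hp.eq_zero_of_notMem hi]

theorem comp_eq_self_iff (hp : IsCompleteOrthogonal s p) (g : Y ⟶ X) (n : ι) :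
    g ≫ p n = g ↔ ∀ k, k ≠ n → g ≫ p k = 0 := by
  constructor
  · intro hg k hk
    rw [← hg, Category.assoc, hp.comp_eq_zero n k hk.symm, Limits.comp_zero]
  · intro hg
    conv_rhs => rw [← hp.comp_sum g]
    by_cases hn : n ∈ s
    · exact (Finset.sum_eq_single_of_mem n hn fun k _ hk => hg k hk).symm
    · rw [Finset.sum_eq_zero fun k hk => hg k (ne_of_mem_of_not_mem hk hn),
        hp.eq_zero_of_notMem hn, Limits.comp_zero]

theorem eq_sum_comp_iff (hp : IsCompleteOrthogonal s p) (f : X ⟶ Y) (g : ι → (X ⟶ Y)) :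
    f = ∑ i ∈ s, p i ≫ g i ↔ ∀ i, p i ≫ g i = p i ≫ f := by
  constructor
  · rintro rfl i
    exact (hp.comp_sum_comp g i).symm
  · intro hg
    conv_lhs => rw [← hp.sum_comp f]
    exact Finset.sum_congr rfl fun i _ => (hg i).symm

theorem tensor [MonoidalCategory C] [MonoidalPreadditive C] {κ : Type*} {t : Finset κ}
    {q : κ → (Y ⟶ Y)} (hp : IsCompleteOrthogonal s p) (hq : IsCompleteOrthogonal t q) :
    IsCompleteOrthogonal (s ×ˢ t) fun ik => p ik.1 ⊗ₘ q ik.2 where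
  comp_eq_zero := by
    rintro ⟨i, k⟩ ⟨i', k'⟩ hne
    rw [tensorHom_comp_tensorHom]
    by_cases hi : i = i'
    · have hk : k ≠ k' := fun hk => hne (by rw [hi, hk])
      rw [hq.comp_eq_zero k k' hk, MonoidalPreadditive.tensor_zero]
    · rw [hp.comp_eq_zero i i' hi, MonoidalPreadditive.zero_tensor]
  sum_eq_id := by
    simp only [Finset.sum_product, ← tensor_sum, ← sum_tensor, hp.sum_eq_id, hq.sum_eq_id,
      id_tensorHom_id]

end IsCompleteOrthogonal

end CategoryTheory

theorem multiplicative_projectors_tfae_general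
    {C : Type*} [Category C] [Preadditive C] [MonoidalCategory C] [MonoidalPreadditive C]
    (X : C) (d : ℕ) (δ : X ⊗ X ⟶ X) (p : ℕ → (X ⟶ X))
    (h_orth : ∀ i j, i ≠ j → p i ≫ p j = 0)
    (h_complete : ∑ i ∈ Finset.range (2 * d + 1), p i = 𝟙 X) :
    ((∀ i j k, k ≠ i + j → (p i ⊗ₘ p j) ≫ δ ≫ p k = 0) ↔
      (∀ i j, (p i ⊗ₘ p j) ≫ δ ≫ p (i + j) = (p i ⊗ₘ p j) ≫ δ)) ∧
    ((∀ i j, (p i ⊗ₘ p j) ≫ δ ≫ p (i + j) = (p i ⊗ₘ p j) ≫ δ) ↔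
      δ = ∑ i ∈ Finset.range (2 * d + 1), ∑ j ∈ Finset.range (2 * d + 1),
        (p i ⊗ₘ p j) ≫ δ ≫ p (i + j)) := by
  have hp : IsCompleteOrthogonal (Finset.range (2 * d + 1)) p := ⟨h_orth, h_complete⟩
  refine ⟨forall₂_congr fun i j => ?_, ?_⟩
  · simpa only [Category.assoc] using (hp.comp_eq_self_iff ((p i ⊗ₘ p j) ≫ δ) (i + j)).symm
  · have h := (hp.tensor hp).eq_sum_comp_iff δ fun ij => δ ≫ p (ij.1 + ij.2)
    simp only [Finset.sum_product, Prod.forall] at h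
    exact h.symm

/-- In a monoidally preadditive monoidal category, given an object `X`, a
"multiplication" `δ : X ⊗ X ⟶ X` and a complete family of pairwise orthogonal projectors
`p i` (vanishing for `i > 2d`), the three characterizations of multiplicativity are
equivalent: (a) `p k ∘ δ ∘ (p i ⊗ p j) = 0` for `k ≠ i + j`; (b)
`p (i+j) ∘ δ ∘ (p i ⊗ p j) = δ ∘ (p i ⊗ p j)` for all `i, j`; (c)
`δ = ∑_{i,j ≤ 2d} p (i+j) ∘ δ ∘ (p i ⊗ p j)`. -/
theorem multiplicative_projectors_tfae
    {C : Type*} [Category C] [Preadditive C] [MonoidalCategory C] [MonoidalPreadditive C]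
    (X : C) (d : ℕ) (δ : X ⊗ X ⟶ X) (p : ℕ → (X ⟶ X))
    (h_idem : ∀ i, p i ≫ p i = p i)
    (h_orth : ∀ i j, i ≠ j → p i ≫ p j = 0)
    (h_vanish : ∀ i, 2 * d < i → p i = 0)
    (h_complete : ∑ i ∈ Finset.range (2 * d + 1), p i = 𝟙 X) :
    ((∀ i j k, k ≠ i + j → (p i ⊗ₘ p j) ≫ δ ≫ p k = 0) ↔
      (∀ i j, (p i ⊗ₘ p j) ≫ δ ≫ p (i + j) = (p i ⊗ₘ p j) ≫ δ)) ∧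
    ((∀ i j, (p i ⊗ₘ p j) ≫ δ ≫ p (i + j) = (p i ⊗ₘ p j) ≫ δ) ↔
      δ = ∑ i ∈ Finset.range (2 * d + 1), ∑ j ∈ Finset.range (2 * d + 1),
        (p i ⊗ₘ p j) ≫ δ ≫ p (i + j)) :=
  multiplicative_projectors_tfae_general X d δ p h_orth h_complete
end

section
/- Let C be a symmetric monoidal preadditive category whose tensor product is additive in each variable (monoidally preadditive), let X and Y be objects of C equipped with morphisms δ_X : X ⊗ X ⟶ X and δ_Y : Y ⊗ Y ⟶ Y, natural numbers d_X and d_Y, and families π_X : ℕ → End(X) and π_Y : ℕ → End(Y) of pairwise orthogonal idempotents with π_X(i) = 0 for i > 2d_X, π_Y(i) = 0 for i > 2d_Y, Σ_{i=0}^{2d_X} π_X(i) = 𝟙_X, Σ_{i=0}^{2d_Y} π_Y(i) = 𝟙_Y, and suppose both systems are multiplicative, i.e. π_X(k) ∘ δ_X ∘ (π_X(i) ⊗ π_X(j)) = 0 whenever k ≠ i + j, and similarly for Y. Define δ_{X⊗Y} : (X ⊗ Y) ⊗ (X ⊗ Y) ⟶ X ⊗ Y as the composition of the middle-factor braiding (X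 ⊗ Y) ⊗ (X ⊗ Y) ≅ (X ⊗ X) ⊗ (Y ⊗ Y) with δ_X ⊗ δ_Y, and define π_{X⊗Y}(k) := Σ_{i+j=k} π_X(i) ⊗ π_Y(j). Then the family π_{X⊗Y} consists of pairwise orthogonal idempotents with π_{X⊗Y}(k) = 0 for k > 2(d_X + d_Y) and Σ_{k=0}^{2(d_X+d_Y)} π_{X⊗Y}(k) = 𝟙_{X⊗Y}, and it is multiplicative for δ_{X⊗Y}: π_{X⊗Y}(k) ∘ δ_{X⊗Y} ∘ (π_{X⊗Y}(i) ⊗ π_{X⊗Y}(j)) = 0 whenever k ≠ i + j. -/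
/-!
Write `e (i, j) = pX i ⊗ pY j`. Since `(f ⊗ g) ≫ (f' ⊗ g') = (f ≫ f') ⊗ (g ≫ g')` and the tensor
product is bilinear, the `e (i, j)` are again pairwise orthogonal idempotents, so their sums
`pXY k` over the disjoint antidiagonals `i + j = k` are pairwise orthogonal idempotents, and
summing over all `k` recovers `(∑ pX i) ⊗ (∑ pY j) = 𝟙`. For multiplicativity, naturality of the
middle-four interchange `tensorμ` splits each term of `(pXY i ⊗ pXY j) ≫ δXY ≫ pXY k` into
the tensor product of an `X`-term and a `Y`-term, one of which vanishes when `k ≠ i + j`.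
-/

open CategoryTheory MonoidalCategory Finset

namespace Finset

theorem disjoint_antidiagonal_of_ne {k l : ℕ} (h : k ≠ l) :
    Disjoint (antidiagonal k) (antidiagonal l) :=
  disjoint_left.2 fun _ hk hl =>
    h ((HasAntidiagonal.mem_antidiagonal.1 hk).symm.trans (HasAntidiagonal.mem_antidiagonal.1 hl))

theorem sum_range_sum_antidiagonal_of_support_subset {M : Type*} [AddCommMonoid M]
    (f : ℕ × ℕ → M) (a b : ℕ) (hf : ∀ p, a < p.1 ∨ b < p.2 → f p = 0) :
    ∑ k ∈ range (a + b + 1), ∑ p ∈ antidiagonal k, f p =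
      ∑ p ∈ range (a + 1) ×ˢ range (b + 1), f p := by
  rw [← sum_fiberwise_of_maps_to (s := range (a + 1) ×ˢ range (b + 1)) (t := range (a + b + 1))
    (g := fun p => p.1 + p.2)]
  · refine sum_congr rfl fun k _ => (sum_subset (fun p hp => ?_) fun p hp hps => hf p ?_).symm
    · simp only [mem_filter, mem_product, mem_range] at hp
      exact HasAntidiagonal.mem_antidiagonal.2 hp.2
    · simp only [mem_filter, mem_product, mem_range, HasAntidiagonal.mem_antidiagonal] at hp hps
      omega
  · intro p hp
    simp only [mem_product, mem_range] at hp ⊢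
    omega

end Finset

namespace CategoryTheory

variable {C : Type*} [Category C]

theorem Preadditive.sum_comp_sum_of_orthogonal_idempotents [Preadditive C] {ι : Type*}
    [DecidableEq ι] {Z : C} (e : ι → (Z ⟶ Z)) (hidem : ∀ i, e i ≫ e i = e i)
    (horth : ∀ i j, i ≠ j → e i ≫ e j = 0) (s t : Finset ι) :
    (∑ i ∈ s, e i) ≫ (∑ j ∈ t, e j) = ∑ i ∈ s ∩ t, e i := by
  simp_rw [Preadditive.sum_comp, Preadditive.comp_sum]
  rw [← sum_filter_add_sum_filter_not s (· ∈ t), filter_mem_eq_inter, add_eq_left.2]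
  · refine sum_congr rfl fun i hi => ?_
    rw [sum_eq_single_of_mem i (mem_inter.1 hi).2 fun j _ hji => horth i j hji.symm, hidem]
  · refine sum_eq_zero fun i hi => sum_eq_zero fun j hj => horth i j ?_
    rintro rfl
    exact (mem_filter.1 hi).2 hj

variable [MonoidalCategory C]

theorem tensorHom_eq_zero [Preadditive C] [MonoidalPreadditive C] {X₁ X₂ Y₁ Y₂ : C}
    {f : X₁ ⟶ X₂} {g : Y₁ ⟶ Y₂} (h : f = 0 ∨ g = 0) : f ⊗ₘ g = 0 := by
  rcases h with rfl | rfl <;> simp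

theorem tensorHom_comp_tensorHom_eq_zero_of_ne [Preadditive C] [MonoidalPreadditive C]
    {ι κ : Type*} {X Y : C} (f : ι → (X ⟶ X)) (g : κ → (Y ⟶ Y))
    (hf : ∀ i j, i ≠ j → f i ≫ f j = 0) (hg : ∀ i j, i ≠ j → g i ≫ g j = 0) {p q : ι × κ}
    (hpq : p ≠ q) : (f p.1 ⊗ₘ g p.2) ≫ (f q.1 ⊗ₘ g q.2) = 0 := by
  rw [tensorHom_comp_tensorHom]
  exact tensorHom_eq_zero ((not_and_or.1 (Prod.ext_iff.not.1 hpq)).imp (hf _ _) (hg _ _))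

theorem tensorHom_comp_tensorHom_tensorHom_comp_tensorμ_comp_tensorHom [BraidedCategory C]
    {X₁ X₂ Y₁ Y₂ X X' Y Y' : C} (a c : X₁ ⟶ X₂) (b d : Y₁ ⟶ Y₂) (δX : X₂ ⊗ X₂ ⟶ X)
    (δY : Y₂ ⊗ Y₂ ⟶ Y) (e : X ⟶ X') (f : Y ⟶ Y') :
    ((a ⊗ₘ b) ⊗ₘ (c ⊗ₘ d)) ≫ tensorμ X₂ Y₂ X₂ Y₂ ≫ (δX ⊗ₘ δY) ≫ (e ⊗ₘ f) =
      tensorμ X₁ Y₁ X₁ Y₁ ≫ (((a ⊗ₘ c) ≫ δX ≫ e) ⊗ₘ ((b ⊗ₘ d) ≫ δY ≫ f)) := by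
  rw [tensorμ_natural_assoc, tensorHom_comp_tensorHom, tensorHom_comp_tensorHom]

end CategoryTheory

/-- In a symmetric monoidal preadditive category, if `(X, δX, pX)` and
`(Y, δY, pY)` are objects with "small diagonal" multiplications and multiplicative complete
families of pairwise orthogonal projectors (supported in degrees `≤ 2dX`, resp. `≤ 2dY`),
then the product family `pXY k = ∑_{i+j=k} pX i ⊗ pY j` on `X ⊗ Y`, together with the
multiplication `δXY = tensorμ ≫ (δX ⊗ δY)` obtained from the middle-factor braiding, is
again a complete family of pairwise orthogonal projectors supported in degrees
`≤ 2(dX + dY)`, and it is multiplicative. -/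
theorem product_of_multiplicative_projectors
    {C : Type*} [Category C] [Preadditive C] [MonoidalCategory C] [MonoidalPreadditive C]
    [SymmetricCategory C]
    (X Y : C) (δX : X ⊗ X ⟶ X) (δY : Y ⊗ Y ⟶ Y) (dX dY : ℕ)
    (pX : ℕ → (X ⟶ X)) (pY : ℕ → (Y ⟶ Y))
    (hX_idem : ∀ i, pX i ≫ pX i = pX i)
    (hY_idem : ∀ i, pY i ≫ pY i = pY i)
    (hX_orth : ∀ i j, i ≠ j → pX i ≫ pX j = 0)
    (hY_orth : ∀ i j, i ≠ j → pY i ≫ pY j = 0)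
    (hX_vanish : ∀ i, 2 * dX < i → pX i = 0)
    (hY_vanish : ∀ i, 2 * dY < i → pY i = 0)
    (hX_complete : ∑ i ∈ Finset.range (2 * dX + 1), pX i = 𝟙 X)
    (hY_complete : ∑ i ∈ Finset.range (2 * dY + 1), pY i = 𝟙 Y)
    (hX_mult : ∀ i j k, k ≠ i + j → (pX i ⊗ₘ pX j) ≫ δX ≫ pX k = 0)
    (hY_mult : ∀ i j k, k ≠ i + j → (pY i ⊗ₘ pY j) ≫ δY ≫ pY k = 0)
    (δXY : (X ⊗ Y) ⊗ (X ⊗ Y) ⟶ X ⊗ Y)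
    (hδXY : δXY = tensorμ X Y X Y ≫ (δX ⊗ₘ δY))
    (pXY : ℕ → (X ⊗ Y ⟶ X ⊗ Y))
    (hpXY : ∀ k, pXY k = ∑ ij ∈ Finset.HasAntidiagonal.antidiagonal k, pX ij.1 ⊗ₘ pY ij.2) :
    (∀ k, pXY k ≫ pXY k = pXY k) ∧
    (∀ k l, k ≠ l → pXY k ≫ pXY l = 0) ∧
    (∀ k, 2 * (dX + dY) < k → pXY k = 0) ∧
    (∑ k ∈ Finset.range (2 * (dX + dY) + 1), pXY k = 𝟙 (X ⊗ Y)) ∧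
    (∀ i j k, k ≠ i + j → (pXY i ⊗ₘ pXY j) ≫ δXY ≫ pXY k = 0) := by
  set e : ℕ × ℕ → (X ⊗ Y ⟶ X ⊗ Y) := fun p => pX p.1 ⊗ₘ pY p.2 with he
  have he_idem : ∀ p, e p ≫ e p = e p := fun p => by
    rw [he, tensorHom_comp_tensorHom, hX_idem, hY_idem]
  have he_orth : ∀ p q, p ≠ q → e p ≫ e q = 0 := fun _ _ =>
    tensorHom_comp_tensorHom_eq_zero_of_ne pX pY hX_orth hY_orth
  have he_vanish : ∀ p : ℕ × ℕ, 2 * dX < p.1 ∨ 2 * dY < p.2 → e p = 0 := fun p h =>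
    tensorHom_eq_zero (h.imp (hX_vanish _) (hY_vanish _))
  have hpXY_comp : ∀ k l, pXY k ≫ pXY l =
      ∑ p ∈ HasAntidiagonal.antidiagonal k ∩ HasAntidiagonal.antidiagonal l, e p := fun k l => by
    rw [hpXY, hpXY, Preadditive.sum_comp_sum_of_orthogonal_idempotents e he_idem he_orth]
  refine ⟨fun k => ?_, fun k l hkl => ?_, fun k hk => ?_, ?_, fun i j k hk => ?_⟩
  · rw [hpXY_comp, inter_self, hpXY]
  · rw [hpXY_comp, disjoint_iff_inter_eq_empty.1 (disjoint_antidiagonal_of_ne hkl), sum_empty]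
  · rw [hpXY]
    refine sum_eq_zero fun p hp => he_vanish p ?_
    rw [HasAntidiagonal.mem_antidiagonal] at hp
    omega
  · simp_rw [hpXY, mul_add, sum_range_sum_antidiagonal_of_support_subset e _ _ he_vanish,
      sum_product, he, ← tensor_sum, ← sum_tensor, hX_complete, hY_complete, id_tensorHom_id]
  · rw [hδXY, hpXY i, hpXY j, hpXY k]
    simp only [sum_tensor, tensor_sum, Preadditive.sum_comp, Preadditive.comp_sum, Category.assoc]
    refine sum_eq_zero fun r hr => sum_eq_zero fun q hq => sum_eq_zero fun p hp => ?_
    rw [HasAntidiagonal.mem_antidiagonal] at hp hq hr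
    rw [tensorHom_comp_tensorHom_tensorHom_comp_tensorμ_comp_tensorHom, tensorHom_eq_zero,
      Limits.comp_zero]
    by_cases h1 : r.1 = p.1 + q.1
    · exact Or.inr (hY_mult _ _ _ (by omega))
    · exact Or.inl (hX_mult _ _ _ h1)
end

section
/- Let n ≥ 5 be a natural number. In the polynomial ring ℚ[x, y], define for each natural number k the polynomial R_k(x, y) := Σ_{i=0}^{⌊k/2⌋} (−1)^i · binom(k−i, i) · x^{k−2i} · y^i (so R_k = x^k − binom(k−1,1)·x^{k−2}y + binom(k−2,2)·x^{k−4}y² − ⋯). Suppose P ∈ ℚ[x, y] is a nonzero polynomial and m₁, m₂, m₃ ∈ ℚ are scalars such that P(x,y) · (2x²y + y²) = (m₁x² + m₂y) · R_{n+1}(x, y) + m₃ · x · R_{n+2}(x, y). Then P is not divisible by y. -/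
/-!
Set `x = 1`. If `P = y Q`, the relation becomes
`y² (y + 2) Q(1, y) = (m₁ + m₂ y) r_{n+1} + m₃ r_{n+2}` with `r_k = R_k(1, y)`.
The constant and linear coefficients of `r_k` are `1` and `-(k - 1)`, so their vanishing
forces `m₂ = m₃ = -m₁`. Evaluating at `y = -2` then gives `m₁ (3 r_{n+1}(-2) - r_{n+2}(-2)) = 0`.
From `r_{k+2} = r_{k+1} - y r_k` the values `r_k(-2)` are the Jacobsthal numbers
`(2^{k+1} + (-1)^k) / 3`, for which `3 r_{n+1}(-2) - r_{n+2}(-2) ≠ 0`. Hence all `mᵢ` vanish,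
and then `P (2x²y + y²) = 0` forces `P = 0`.
-/

open MvPolynomial

/-- The polynomial `R_k(x, y) = ∑_{i=0}^{⌊k/2⌋} (−1)^i C(k−i, i) x^{k−2i} y^i`
in `ℚ[x, y]`, with `x = X 0` of degree 1 and `y = X 1` of degree 2. -/
noncomputable def grassRelation (k : ℕ) : MvPolynomial (Fin 2) ℚ :=
  ∑ i ∈ Finset.range (k / 2 + 1),
    C ((-1 : ℚ) ^ i * ((k - i).choose i : ℚ)) * X 0 ^ (k - 2 * i) * X 1 ^ i

open scoped Polynomial

noncomputable def dehomogenize : MvPolynomial (Fin 2) ℚ →ₐ[ℚ] ℚ[X] :=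
  aeval ![1, Polynomial.X]

@[simp]
theorem dehomogenize_X_zero : dehomogenize (X 0) = 1 := by
  simp [dehomogenize]

@[simp]
theorem dehomogenize_X_one : dehomogenize (X 1) = Polynomial.X := by
  simp [dehomogenize]

@[simp]
theorem dehomogenize_C (a : ℚ) : dehomogenize (C a) = Polynomial.C a :=
  aeval_C _ a

theorem dehomogenize_C_mul_X_pow_mul_X_pow (a : ℚ) (e i : ℕ) :
    dehomogenize (C a * X 0 ^ e * X 1 ^ i) = Polynomial.C a * Polynomial.X ^ i := by
  simp only [map_mul, map_pow, dehomogenize_C, dehomogenize_X_zero, dehomogenize_X_one, one_pow,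
    mul_one]

theorem coeff_dehomogenize_grassRelation (k i : ℕ) :
    (dehomogenize (grassRelation k)).coeff i = (-1) ^ i * ((k - i).choose i : ℚ) := by
  simp only [grassRelation, map_sum, dehomogenize_C_mul_X_pow_mul_X_pow,
    Polynomial.finsetSum_coeff, Polynomial.coeff_C_mul_X_pow, Finset.sum_ite_eq, Finset.mem_range]
  split_ifs with hi
  · rfl
  · rw [Nat.choose_eq_zero_of_lt (by omega), Nat.cast_zero, mul_zero]

theorem dehomogenize_grassRelation_add_two (k : ℕ) :
    dehomogenize (grassRelation (k + 2)) =
      dehomogenize (grassRelation (k + 1)) - Polynomial.X * dehomogenize (grassRelation k) := by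
  ext (_ | i)
  · simp [coeff_dehomogenize_grassRelation]
  · simp only [coeff_dehomogenize_grassRelation, Polynomial.coeff_sub, Polynomial.coeff_X_mul]
    rcases le_or_gt i k with hik | hik
    · rw [show k + 2 - (i + 1) = k - i + 1 by omega, show k + 1 - (i + 1) = k - i by omega,
        Nat.choose_succ_succ]
      push_cast; ring
    · rw [show k + 2 - (i + 1) = 0 by omega, show k + 1 - (i + 1) = 0 by omega,
        show k - i = 0 by omega, Nat.choose_eq_zero_of_lt (Nat.succ_pos i),
        Nat.choose_eq_zero_of_lt (by omega : 0 < i)]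
      simp

theorem three_mul_eval_neg_two_dehomogenize_grassRelation (k : ℕ) :
    3 * (dehomogenize (grassRelation k)).eval (-2) = 2 ^ (k + 1) + (-1) ^ k := by
  induction k using Nat.twoStepInduction with
  | zero => norm_num [grassRelation, dehomogenize]
  | one => norm_num [grassRelation, dehomogenize]
  | more k ih₀ ih₁ =>
    rw [dehomogenize_grassRelation_add_two, Polynomial.eval_sub, Polynomial.eval_mul,
      Polynomial.eval_X]
    linear_combination ih₁ + 2 * ih₀

theorem eval_neg_two_dehomogenize_grassRelation_succ_ne {k : ℕ} (hk : 2 ≤ k) :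
    (dehomogenize (grassRelation (k + 1))).eval (-2) ≠
      3 * (dehomogenize (grassRelation k)).eval (-2) := by
  intro h
  have h₀ := three_mul_eval_neg_two_dehomogenize_grassRelation k
  have h₁ := three_mul_eval_neg_two_dehomogenize_grassRelation (k + 1)
  have hpow : (2 : ℚ) ^ 3 ≤ 2 ^ (k + 1) := pow_le_pow_right₀ (by norm_num) (by omega)
  have hzero : (2 : ℚ) ^ (k + 1) + 4 * (-1) ^ k = 0 := by
    linear_combination -3 * h + h₁ - 3 * h₀
  rcases neg_one_pow_eq_or ℚ k with hsign | hsign <;> rw [hsign] at hzero <;> linarith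

theorem eq_zero_of_dvd_grassRelation_combination {k : ℕ} (hk : 2 ≤ k) {a b c : ℚ}
    (hdvd : Polynomial.X ^ 2 * (Polynomial.X + 2) ∣
      (Polynomial.C a + Polynomial.C b * Polynomial.X) * dehomogenize (grassRelation k) +
        Polynomial.C c * dehomogenize (grassRelation (k + 1))) :
    a = 0 ∧ b = 0 ∧ c = 0 := by
  obtain ⟨j, rfl⟩ := Nat.exists_eq_add_of_le' hk
  have hcoeff := Polynomial.X_pow_dvd_iff.1 (dvd_of_mul_right_dvd hdvd)
  have hroot := Polynomial.eval_eq_zero_of_dvd_of_eval_eq_zero (dvd_of_mul_left_dvd hdvd)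
    (x := -2) (by simp)
  have h₀ := hcoeff 0 (by norm_num)
  have h₁ := hcoeff 1 (by norm_num)
  simp only [add_mul, mul_assoc, Polynomial.coeff_add, Polynomial.coeff_C_mul,
    Polynomial.coeff_X_mul, Polynomial.coeff_X_mul_zero, coeff_dehomogenize_grassRelation] at h₀ h₁
  norm_num at h₀ h₁
  simp only [Polynomial.eval_add, Polynomial.eval_mul, Polynomial.eval_C, Polynomial.eval_X] at hroot
  have hc : c = -a := by linear_combination h₀
  have hb : b = -a := by linear_combination h₁ + (2 + (j : ℚ)) * h₀
  have ha : a = 0 := by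
    rw [hb, hc] at hroot
    refine (mul_eq_zero.1 (?_ : a * (_ - 3 * _) = 0)).resolve_right
      (sub_ne_zero.2 (eval_neg_two_dehomogenize_grassRelation_succ_ne hk))
    linear_combination -hroot
  exact ⟨ha, by rw [hb, ha, neg_zero], by rw [hc, ha, neg_zero]⟩

/-- Let `n ≥ 5`. If a nonzero polynomial `P ∈ ℚ[x, y]` and scalars
`m₁, m₂, m₃ ∈ ℚ` satisfy
`P · (2x²y + y²) = (m₁x² + m₂y) · R_{n+1} + m₃ · x · R_{n+2}`,
then `P` is not divisible by `y`. -/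
theorem not_y_dvd_of_grass_relation
    (n : ℕ) (hn : 5 ≤ n)
    (P : MvPolynomial (Fin 2) ℚ) (hP : P ≠ 0)
    (m₁ m₂ m₃ : ℚ)
    (h : P * (2 * X 0 ^ 2 * X 1 + X 1 ^ 2) =
      (C m₁ * X 0 ^ 2 + C m₂ * X 1) * grassRelation (n + 1) +
        C m₃ * X 0 * grassRelation (n + 2)) :
    ¬ (X 1 ∣ P) := by
  rintro ⟨Q, rfl⟩
  have hdvd : Polynomial.X ^ 2 * (Polynomial.X + 2) ∣
      (Polynomial.C m₁ + Polynomial.C m₂ * Polynomial.X) * dehomogenize (grassRelation (n + 1)) +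
        Polynomial.C m₃ * dehomogenize (grassRelation (n + 1 + 1)) := by
    refine ⟨dehomogenize Q, ?_⟩
    have h' := congrArg dehomogenize h
    simp only [map_mul, map_add, map_pow, map_ofNat, dehomogenize_X_zero, dehomogenize_X_one,
      dehomogenize_C, one_pow, mul_one] at h'
    linear_combination -h'
  obtain ⟨rfl, rfl, rfl⟩ := eq_zero_of_dvd_grassRelation_combination (by omega) hdvd
  have hfactor : (2 * X 0 ^ 2 * X 1 + X 1 ^ 2 : MvPolynomial (Fin 2) ℚ) ≠ 0 := fun h0 => by
    have h1 := congrArg (eval ![1, 1]) h0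
    norm_num at h1
  simp only [map_zero, zero_mul, add_zero] at h
  exact hP ((mul_eq_zero.1 h).resolve_right hfactor)
end

section
/- Let n ≥ 5 be a natural number. In ℚ[x, y], define R_k(x, y) := Σ_{i=0}^{⌊k/2⌋} (−1)^i · binom(k−i, i) · x^{k−2i} · y^i. Suppose P ∈ ℚ[x, y] is divisible by y and m₁, m₂, m₃ ∈ ℚ satisfy the identity P(x,y) · (2x²y + y²) = (m₁x² + m₂y) · R_{n+1}(x, y) + m₃ · x · R_{n+2}(x, y). Then m₃ = −m₁ and m₂ = −m₁; moreover, if in addition P ≠ 0, then m₁ ≠ 0. -/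
/-!
Both sides are evaluated, together with their `y`-derivatives, at `(x, y) = (1, 0)`. Since `y ∣ P`,
the left-hand side is divisible by `y²`, so both values vanish there. On the right-hand side
`R_k(1, 0) = 1` and `∂_y R_{k+1}(1, 0) = -k`, which yields the linear relations `m₁ + m₃ = 0` and
`m₂ - n m₁ - (n + 1) m₃ = 0`. If `m₁ = 0`, the right-hand side vanishes, and `P = 0` because
`2x²y + y²` is a nonzero polynomial.
-/

open MvPolynomial

namespace MvPolynomial

variable {σ R : Type*} [CommSemiring R] {i : σ} {x : σ → R} {p : MvPolynomial σ R}

theorem eval_eq_zero_of_X_dvd (hp : X i ∣ p) (hx : x i = 0) : eval x p = 0 := by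
  obtain ⟨q, rfl⟩ := hp
  simp [hx]

theorem eval_pderiv_eq_zero_of_X_sq_dvd (hp : X i ^ 2 ∣ p) (hx : x i = 0) :
    eval x (pderiv i p) = 0 := by
  obtain ⟨q, rfl⟩ := hp
  simp [hx]

end MvPolynomial

theorem eval_grassRelation (k : ℕ) : eval ![1, 0] (grassRelation k) = 1 := by
  unfold grassRelation
  rw [map_sum, Finset.sum_eq_single 0]
  · simp
  · intro i _ hi
    simp [hi]
  · simp

theorem eval_pderiv_grassRelation (k : ℕ) :
    eval ![1, 0] (pderiv 1 (grassRelation (k + 1))) = -k := by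
  unfold grassRelation
  rw [map_sum, map_sum, Finset.sum_eq_single 1]
  · simp
  · rintro (_ | _ | i) _ hi
    · simp
    · exact absurd rfl hi
    · simp
  · simp

theorem eval_relation_combination (n : ℕ) (a b c : ℚ) :
    eval ![1, 0] ((C a * X 0 ^ 2 + C b * X 1) * grassRelation (n + 1) +
      C c * X 0 * grassRelation (n + 2)) = a + c := by
  simp [eval_grassRelation]

theorem eval_pderiv_relation_combination (n : ℕ) (a b c : ℚ) :
    eval ![1, 0] (pderiv 1 ((C a * X 0 ^ 2 + C b * X 1) * grassRelation (n + 1) +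
      C c * X 0 * grassRelation (n + 2))) = b - n * a - (n + 1) * c := by
  simp only [map_add, map_mul, map_pow, Derivation.leibniz, Derivation.leibniz_pow, pderiv_X,
    Pi.single_eq_same, Pi.single_eq_of_ne (by decide : (0 : Fin 2) ≠ 1), derivation_C, smul_eq_mul,
    nsmul_eq_mul, map_natCast, map_zero, map_one, eval_C, eval_X, eval_grassRelation,
    eval_pderiv_grassRelation, Nat.cast_succ, Matrix.cons_val_zero, Matrix.cons_val_one]
  ring

theorem coeff_relations_of_y_dvd_general
    (n : ℕ)
    (P : MvPolynomial (Fin 2) ℚ) (hdvd : X 1 ∣ P)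
    (m₁ m₂ m₃ : ℚ)
    (h : P * (2 * X 0 ^ 2 * X 1 + X 1 ^ 2) =
      (C m₁ * X 0 ^ 2 + C m₂ * X 1) * grassRelation (n + 1) +
        C m₃ * X 0 * grassRelation (n + 2)) :
    m₃ = -m₁ ∧ m₂ = -m₁ ∧ (P ≠ 0 → m₁ ≠ 0) := by
  obtain ⟨Q, rfl⟩ := hdvd
  have hsq : (X 1 : MvPolynomial (Fin 2) ℚ) ^ 2 ∣ X 1 * Q * (2 * X 0 ^ 2 * X 1 + X 1 ^ 2) :=
    ⟨Q * (2 * X 0 ^ 2 + X 1), by ring⟩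
  have hx : (![1, 0] : Fin 2 → ℚ) 1 = 0 := rfl
  have e₀ : m₁ + m₃ = 0 := by
    rw [← eval_relation_combination n m₁ m₂ m₃, ← h,
      eval_eq_zero_of_X_dvd ((dvd_pow_self _ two_ne_zero).trans hsq) hx]
  have e₁ : m₂ - n * m₁ - (n + 1) * m₃ = 0 := by
    rw [← eval_pderiv_relation_combination n m₁ m₂ m₃, ← h,
      eval_pderiv_eq_zero_of_X_sq_dvd hsq hx]
  have h₃ : m₃ = -m₁ := by linear_combination e₀
  have h₂ : m₂ = -m₁ := by linear_combination e₁ + (n + 1 : ℚ) * e₀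
  refine ⟨h₃, h₂, fun hP hm₁ => hP ?_⟩
  have hne : (2 * X 0 ^ 2 * X 1 + X 1 ^ 2 : MvPolynomial (Fin 2) ℚ) ≠ 0 := fun h0 => by
    have := congrArg (eval 1) h0
    norm_num at this
  simpa [hm₁, h₂, h₃, hne] using h

/-- Let `n ≥ 5`. If `P ∈ ℚ[x, y]` is divisible by `y` and
`m₁, m₂, m₃ ∈ ℚ` satisfy
`P · (2x²y + y²) = (m₁x² + m₂y) · R_{n+1} + m₃ · x · R_{n+2}`,
then `m₃ = −m₁` and `m₂ = −m₁`; moreover if `P ≠ 0`, then `m₁ ≠ 0`. -/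
theorem coeff_relations_of_y_dvd
    (n : ℕ) (hn : 5 ≤ n)
    (P : MvPolynomial (Fin 2) ℚ) (hdvd : X 1 ∣ P)
    (m₁ m₂ m₃ : ℚ)
    (h : P * (2 * X 0 ^ 2 * X 1 + X 1 ^ 2) =
      (C m₁ * X 0 ^ 2 + C m₂ * X 1) * grassRelation (n + 1) +
        C m₃ * X 0 * grassRelation (n + 2)) :
    m₃ = -m₁ ∧ m₂ = -m₁ ∧ (P ≠ 0 → m₁ ≠ 0) :=
  coeff_relations_of_y_dvd_general n P hdvd m₁ m₂ m₃ h
end
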